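/- Let K be a field and C the infinite clock graph. Let A = K × (⊕_{n∈ℕ} K) be the unital K-algebra with componentwise addition and multiplication (k, x)·(k', x') = (kk', kx' + k'x + xx') (the unitization of the non-unital algebra ⊕_{n∈ℕ} K with componentwise operations). Then the assignment v ↦ (1, 0) and eₙeₙ* ↦ (0, εₙ), where {εₙ : n ∈ ℕ} is the canonical basis of ⊕_{n∈ℕ} K, extends to a K-algebra isomorphism from the corner v L_K(C) v onto A. -/

import Mathlib

/-- A directed graph: vertices, edges, source and range maps. -/
structure DirGraph where
  V : Type
  E : Type
  src : E → V
  rng : E → V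

namespace DirGraph

/-- Generators of the Leavitt path algebra: vertices, edges, and ghost edges. -/
inductive LGen (G : DirGraph) : Type
  | vertex : G.V → LGen G
  | edge : G.E → LGen G
  | ghost : G.E → LGen G

variable (K : Type) [Field K]

/-- The free unital associative `K`-algebra on the Leavitt generators. -/
abbrev FA (G : DirGraph) : Type := FreeAlgebra K (LGen G)

/-- The generator corresponding to a vertex. -/
noncomputable def fv (G : DirGraph) (v : G.V) : FA K G := FreeAlgebra.ι K (LGen.vertex v)

/-- The generator corresponding to an edge. -/
noncomputable def fe (G : DirGraph) (e : G.E) : FA K G := FreeAlgebra.ι K (LGen.edge e)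

/-- The generator corresponding to a ghost edge. -/
noncomputable def fg (G : DirGraph) (e : G.E) : FA K G := FreeAlgebra.ι K (LGen.ghost e)

/-- The defining relations of the Leavitt path algebra of `G` over `K`. -/
inductive LeavittRel (G : DirGraph) : FA K G → FA K G → Prop
  | vertex_same (v : G.V) : LeavittRel G (fv K G v * fv K G v) (fv K G v)
  | vertex_ne (v w : G.V) (h : v ≠ w) : LeavittRel G (fv K G v * fv K G w) 0
  | src_edge (e : G.E) : LeavittRel G (fv K G (G.src e) * fe K G e) (fe K G e)
  | edge_rng (e : G.E) : LeavittRel G (fe K G e * fv K G (G.rng e)) (fe K G e)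
  | rng_ghost (e : G.E) : LeavittRel G (fv K G (G.rng e) * fg K G e) (fg K G e)
  | ghost_src (e : G.E) : LeavittRel G (fg K G e * fv K G (G.src e)) (fg K G e)
  | ghost_edge_same (e : G.E) : LeavittRel G (fg K G e * fe K G e) (fv K G (G.rng e))
  | ghost_edge_ne (e f : G.E) (h : e ≠ f) : LeavittRel G (fg K G e * fe K G f) 0
  | ck (v : G.V) (hfin : {e : G.E | G.src e = v}.Finite)
      (hne : {e : G.E | G.src e = v}.Nonempty) :
      LeavittRel G (fv K G v) (∑ e ∈ hfin.toFinset, fe K G e * fg K G e)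

/-- The quotient of the free unital `K`-algebra on the generators by the Leavitt
relations.  The Leavitt path algebra `L_K(G)` is the non-unital subalgebra of `LPA K G`
generated by the images of the generators (see `LSub`). -/
abbrev LPA (G : DirGraph) : Type := RingQuot (LeavittRel K G)

/-- The image of a vertex in `LPA K G`. -/
noncomputable def Lv (G : DirGraph) (v : G.V) : LPA K G :=
  RingQuot.mkAlgHom K (LeavittRel K G) (fv K G v)

/-- The image of an edge in `LPA K G`. -/
noncomputable def Le (G : DirGraph) (e : G.E) : LPA K G :=
  RingQuot.mkAlgHom K (LeavittRel K G) (fe K G e)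

/-- The image of a ghost edge in `LPA K G`. -/
noncomputable def Lg (G : DirGraph) (e : G.E) : LPA K G :=
  RingQuot.mkAlgHom K (LeavittRel K G) (fg K G e)

/-- The Leavitt path algebra `L_K(G)`: the (possibly non-unital) subalgebra of `LPA K G`
generated by the images of the generators. -/
noncomputable def LSub (G : DirGraph) : NonUnitalSubalgebra K (LPA K G) :=
  NonUnitalAlgebra.adjoin K
    (Set.range (Lv K G) ∪ Set.range (Le K G) ∪ Set.range (Lg K G))

theorem Lv_mem (G : DirGraph) (v : G.V) : Lv K G v ∈ LSub K G :=
  NonUnitalAlgebra.subset_adjoin K (Or.inl (Or.inl ⟨v, rfl⟩))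

theorem Le_mem (G : DirGraph) (e : G.E) : Le K G e ∈ LSub K G :=
  NonUnitalAlgebra.subset_adjoin K (Or.inl (Or.inr ⟨e, rfl⟩))

theorem Lg_mem (G : DirGraph) (e : G.E) : Lg K G e ∈ LSub K G :=
  NonUnitalAlgebra.subset_adjoin K (Or.inr ⟨e, rfl⟩)

end DirGraph

namespace DirGraph

/-- The infinite clock graph: one central vertex `none`, vertices `some n`, and for each
`n : ℕ` an edge `n` from `none` to `some n`. -/
def Clock : DirGraph where
  V := Option ℕ
  E := ℕ
  src := fun _ => none
  rng := fun n => some n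

end DirGraph

namespace DirGraph

variable (K : Type) [Field K]

theorem Lv_mul_self (G : DirGraph) (v : G.V) : Lv K G v * Lv K G v = Lv K G v := by
  have h := RingQuot.mkAlgHom_rel K (@LeavittRel.vertex_same K _ G v)
  simpa only [Lv, map_mul] using h

theorem Lv_src_mul_Le (G : DirGraph) (e : G.E) :
    Lv K G (G.src e) * Le K G e = Le K G e := by
  have h := RingQuot.mkAlgHom_rel K (@LeavittRel.src_edge K _ G e)
  simpa only [Lv, Le, map_mul] using h

theorem Lg_mul_Lv_src (G : DirGraph) (e : G.E) :
    Lg K G e * Lv K G (G.src e) = Lg K G e := by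
  have h := RingQuot.mkAlgHom_rel K (@LeavittRel.ghost_src K _ G e)
  simpa only [Lv, Lg, map_mul] using h

/-- The corner `v (L_K(G)) v` as a non-unital subalgebra. -/
noncomputable def corner (G : DirGraph) (v : G.V) : NonUnitalSubalgebra K (LPA K G) where
  carrier := {y : LPA K G | ∃ x : LPA K G, y = Lv K G v * x * Lv K G v}
  add_mem' := by
    rintro a b ⟨x, rfl⟩ ⟨y, rfl⟩
    exact ⟨x + y, by rw [mul_add, add_mul]⟩
  mul_mem' := by
    rintro a b ⟨x, rfl⟩ ⟨y, rfl⟩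
    exact ⟨x * (Lv K G v * Lv K G v) * y, by noncomm_ring⟩
  zero_mem' := ⟨0, by simp⟩
  smul_mem' := by
    rintro c a ⟨x, rfl⟩
    exact ⟨c • x, by rw [mul_smul_comm, smul_mul_assoc]⟩

theorem Lv_mem_corner (G : DirGraph) (v : G.V) : Lv K G v ∈ corner K G v :=
  ⟨Lv K G v, by rw [Lv_mul_self, Lv_mul_self]⟩

theorem clock_ee_mem_corner (n : ℕ) :
    Le K Clock n * Lg K Clock n ∈ corner K Clock none :=
  ⟨Le K Clock n * Lg K Clock n, by
    have h1 : Lv K Clock none * Le K Clock n = Le K Clock n := Lv_src_mul_Le K Clock n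
    have h2 : Lg K Clock n * Lv K Clock none = Lg K Clock n := Lg_mul_Lv_src K Clock n
    rw [← mul_assoc (Lv K Clock none) (Le K Clock n) (Lg K Clock n), h1,
      mul_assoc (Le K Clock n) (Lg K Clock n) (Lv K Clock none), h2]⟩

end DirGraph

set_option synthInstance.maxHeartbeats 1000000
set_option maxHeartbeats 1000000

open DirGraph

/-- Pointwise multiplication on `⊕_{n ∈ ℕ} K` commutes with scalars. -/
instance (K : Type) [Field K] : SMulCommClass K (ℕ →₀ K) (ℕ →₀ K) where
  smul_comm c x y := by
    ext n
    simp only [smul_eq_mul, Finsupp.smul_apply, Finsupp.mul_apply]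
    ring

/-- Pointwise multiplication on `⊕_{n ∈ ℕ} K` is compatible with scalars. -/
instance (K : Type) [Field K] : IsScalarTower K (ℕ →₀ K) (ℕ →₀ K) where
  smul_assoc c x y := by
    ext n
    simp only [smul_eq_mul, Finsupp.smul_apply, Finsupp.mul_apply]
    ring


/-!
The corner `v L_K(C) v` is spanned by `v` and the orthogonal idempotents `pₙ = eₙeₙ*`: the
elements `v`, `pₙ`, `eₙ*` span the left ideal `L_K(C) v`, as left multiplication by any generator
maps each of them to a multiple of another or to `0`, and `v eₙ* = 0`. So
`(k, f) ↦ k v + ∑ fₙ pₙ` is a surjective homomorphism from the unitization onto the corner. It is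
injective because the clock graph has no regular vertex, so `L_K(C)` has the representation
`v ↦ E₀₀`, `eₙ ↦ δₙ E₀₁`, `eₙ* ↦ δₙ E₁₀`, `wₙ ↦ δₙ E₁₁` by `2 × 2` matrices over `ℕ → K`, where
`δₙ` is the indicator of `n`. It sends `k v + ∑ fₙ pₙ` to `(k + f) E₀₀`, and `k + f = 0` forces
`k = 0` since `f` has finite support while `ℕ` is infinite.
-/

theorem Pi.single_one_mul_single_one {ι R : Type*} [DecidableEq ι] [Semiring R] (i j : ι) :
    (Pi.single i 1 * Pi.single j 1 : ι → R) = if i = j then Pi.single i 1 else 0 := by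
  split_ifs with h
  · subst h; rw [← Pi.single_mul, one_mul]
  · ext k; by_cases hk : k = i <;> simp_all [Pi.single_apply]

namespace OrthogonalIdempotents

variable {R A ι : Type*} [CommSemiring R] [Semiring A] [Algebra R A] {e : ι → A}

theorem linearCombination_mul (he : OrthogonalIdempotents e) (f g : ι →₀ R) :
    Finsupp.linearCombination R e (f * g) =
      Finsupp.linearCombination R e f * Finsupp.linearCombination R e g := by
  induction f using Finsupp.induction_linear with
  | zero => simp
  | add f₁ f₂ h₁ h₂ => rw [add_mul, map_add, h₁, h₂, map_add, add_mul]
  | single i a =>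
    induction g using Finsupp.induction_linear with
    | zero => simp
    | add g₁ g₂ h₁ h₂ => rw [mul_add, map_add, h₁, h₂, map_add, mul_add]
    | single j b =>
      simp only [Finsupp.linearCombination_single, smul_mul_smul_comm]
      rcases eq_or_ne i j with rfl | hij
      · rw [← Finsupp.single_mul, Finsupp.linearCombination_single, (he.idem i).eq]
      · have : Finsupp.single i a * Finsupp.single j b = 0 := by
          classical
          ext k
          simp only [Finsupp.mul_apply, Finsupp.single_apply, Finsupp.coe_zero, Pi.zero_apply]
          split_ifs <;> simp_all
        rw [this, map_zero, he.ortho hij, smul_zero]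

noncomputable def linearCombinationHom (he : OrthogonalIdempotents e) : (ι →₀ R) →ₙₐ[R] A where
  __ := Finsupp.linearCombination R e
  map_zero' := (Finsupp.linearCombination R e).map_zero
  map_mul' := he.linearCombination_mul

end OrthogonalIdempotents

theorem Finsupp.mul_linearCombination_of_mul_eq {ι R A : Type*} [CommSemiring R] [Semiring A]
    [Algebra R A] {u : A} {e : ι → A} (h : ∀ i, u * e i = e i) (f : ι →₀ R) :
    u * Finsupp.linearCombination R e f = Finsupp.linearCombination R e f := by
  simpa [Function.comp_def, h] using Finsupp.apply_linearCombination R (LinearMap.mulLeft R u) e f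

theorem Finsupp.linearCombination_mul_of_mul_eq {ι R A : Type*} [CommSemiring R] [Semiring A]
    [Algebra R A] {u : A} {e : ι → A} (h : ∀ i, e i * u = e i) (f : ι →₀ R) :
    Finsupp.linearCombination R e f * u = Finsupp.linearCombination R e f := by
  simpa [Function.comp_def, h] using Finsupp.apply_linearCombination R (LinearMap.mulRight R u) e f

namespace Unitization

variable {R A B : Type*} [CommSemiring R] [NonUnitalSemiring A] [Module R A] [Semiring B]
  [Algebra R B]

noncomputable def liftCorner (u : B) (hu : IsIdempotentElem u) (φ : A →ₙₐ[R] B)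
    (hl : ∀ a, u * φ a = φ a) (hr : ∀ a, φ a * u = φ a) : Unitization R A →ₙₐ[R] B where
  toFun x := x.fst • u + φ x.snd
  map_smul' r x := by simp only [fst_smul, snd_smul, map_smul, smul_add, smul_smul,
    smul_eq_mul, MonoidHom.id_apply]
  map_zero' := by simp
  map_add' x y := by simp only [fst_add, snd_add, map_add, add_smul]; abel
  map_mul' x y := by
    simp only [fst_mul, snd_mul, map_add, map_smul, map_mul, add_mul, mul_add, smul_mul_assoc,
      mul_smul_comm, hu.eq, hl, hr]
    module

variable {u : B} {hu : IsIdempotentElem u} {φ : A →ₙₐ[R] B} {hl : ∀ a, u * φ a = φ a}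
  {hr : ∀ a, φ a * u = φ a}

theorem liftCorner_apply (x : Unitization R A) :
    liftCorner u hu φ hl hr x = x.fst • u + φ x.snd := rfl

theorem mul_liftCorner (x : Unitization R A) :
    u * liftCorner u hu φ hl hr x = liftCorner u hu φ hl hr x := by
  rw [liftCorner_apply, mul_add, mul_smul_comm, hu.eq, hl]

theorem liftCorner_mul (x : Unitization R A) :
    liftCorner u hu φ hl hr x * u = liftCorner u hu φ hl hr x := by
  rw [liftCorner_apply, add_mul, smul_mul_assoc, hu.eq, hr]

theorem mul_liftCorner_mul (x : Unitization R A) :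
    u * liftCorner u hu φ hl hr x * u = liftCorner u hu φ hl hr x := by
  rw [mul_liftCorner, liftCorner_mul]

theorem eq_zero_of_fst_add_apply_eq_zero {ι : Type*} [Infinite ι] {x : Unitization R (ι →₀ R)}
    (h : ∀ i, x.fst + x.snd i = 0) : x = 0 := by
  obtain ⟨i, hi⟩ := Infinite.exists_notMem_finset x.snd.support
  have hfst : x.fst = 0 := by simpa [Finsupp.notMem_support_iff.mp hi] using h i
  refine Unitization.ext hfst (Finsupp.ext fun j => ?_)
  simpa [hfst] using h j

end Unitization

namespace DirGraph

variable {K : Type} [Field K] {G : DirGraph}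

theorem Lv_mul_Lv_of_ne {v w : G.V} (h : v ≠ w) : Lv K G v * Lv K G w = 0 := by
  simpa only [Lv, map_mul, map_zero] using
    RingQuot.mkAlgHom_rel K (LeavittRel.vertex_ne (K := K) v w h)

theorem Le_mul_Lv_rng (e : G.E) : Le K G e * Lv K G (G.rng e) = Le K G e := by
  simpa only [Le, Lv, map_mul] using RingQuot.mkAlgHom_rel K (LeavittRel.edge_rng (K := K) e)

theorem Lv_rng_mul_Lg (e : G.E) : Lv K G (G.rng e) * Lg K G e = Lg K G e := by
  simpa only [Lg, Lv, map_mul] using RingQuot.mkAlgHom_rel K (LeavittRel.rng_ghost (K := K) e)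

theorem Lg_mul_Le (e : G.E) : Lg K G e * Le K G e = Lv K G (G.rng e) := by
  simpa only [Lg, Le, Lv, map_mul] using
    RingQuot.mkAlgHom_rel K (LeavittRel.ghost_edge_same (K := K) e)

theorem Lg_mul_Le_of_ne {e f : G.E} (h : e ≠ f) : Lg K G e * Le K G f = 0 := by
  simpa only [Lg, Le, map_mul, map_zero] using
    RingQuot.mkAlgHom_rel K (LeavittRel.ghost_edge_ne (K := K) e f h)

theorem Le_mul_Lv_of_ne {e : G.E} {w : G.V} (h : G.rng e ≠ w) : Le K G e * Lv K G w = 0 := by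
  rw [← Le_mul_Lv_rng, mul_assoc, Lv_mul_Lv_of_ne h, mul_zero]

theorem Lv_mul_Le_of_ne {v : G.V} {e : G.E} (h : v ≠ G.src e) : Lv K G v * Le K G e = 0 := by
  rw [← Lv_src_mul_Le, ← mul_assoc, Lv_mul_Lv_of_ne h, zero_mul]

theorem Lv_mul_Lg_of_ne {v : G.V} {e : G.E} (h : v ≠ G.rng e) : Lv K G v * Lg K G e = 0 := by
  rw [← Lv_rng_mul_Lg, ← mul_assoc, Lv_mul_Lv_of_ne h, zero_mul]

theorem Le_mul_Le_of_ne {e f : G.E} (h : G.rng e ≠ G.src f) : Le K G e * Le K G f = 0 := by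
  rw [← Le_mul_Lv_rng, mul_assoc, Lv_mul_Le_of_ne h, mul_zero]

theorem Le_mul_Lg_of_ne {e f : G.E} (h : G.rng e ≠ G.rng f) : Le K G e * Lg K G f = 0 := by
  rw [← Le_mul_Lv_rng, mul_assoc, Lv_mul_Lg_of_ne h, mul_zero]

theorem Lg_mul_Lg_of_ne {e f : G.E} (h : G.src e ≠ G.rng f) : Lg K G e * Lg K G f = 0 := by
  rw [← Lg_mul_Lv_src, mul_assoc, Lv_mul_Lg_of_ne h, mul_zero]

theorem Lv_src_mul_Le_mul_Lg (e : G.E) :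
    Lv K G (G.src e) * (Le K G e * Lg K G e) = Le K G e * Lg K G e := by
  rw [← mul_assoc, Lv_src_mul_Le]

theorem Le_mul_Lg_mul_Lv_src (e : G.E) :
    Le K G e * Lg K G e * Lv K G (G.src e) = Le K G e * Lg K G e := by
  rw [mul_assoc, Lg_mul_Lv_src]

theorem Lv_mul_Le_mul_Lg_of_ne {v : G.V} {e : G.E} (h : v ≠ G.src e) :
    Lv K G v * (Le K G e * Lg K G e) = 0 := by
  rw [← mul_assoc, Lv_mul_Le_of_ne h, zero_mul]

theorem Le_mul_Le_mul_Lg_of_ne {e f : G.E} (h : G.rng e ≠ G.src f) :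
    Le K G e * (Le K G f * Lg K G f) = 0 := by
  rw [← mul_assoc, Le_mul_Le_of_ne h, zero_mul]

theorem Lg_mul_Le_mul_Lg (e : G.E) : Lg K G e * (Le K G e * Lg K G e) = Lg K G e := by
  rw [← mul_assoc, Lg_mul_Le, Lv_rng_mul_Lg]

theorem Lg_mul_Le_mul_Lg_of_ne {e f : G.E} (h : e ≠ f) : Lg K G e * (Le K G f * Lg K G f) = 0 := by
  rw [← mul_assoc, Lg_mul_Le_of_ne h, zero_mul]

theorem orthogonalIdempotents_Le_mul_Lg :
    OrthogonalIdempotents fun e : G.E => Le K G e * Lg K G e where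
  idem e := by rw [IsIdempotentElem, mul_assoc, Lg_mul_Le_mul_Lg]
  ortho e f h := by
    dsimp only
    rw [mul_assoc, Lg_mul_Le_mul_Lg_of_ne h, mul_zero]

theorem mul_mem_span_of_generators_mul_mem {T : Set (LPA K G)}
    (hv : ∀ v, ∀ t ∈ T, Lv K G v * t ∈ Submodule.span K T)
    (he : ∀ e, ∀ t ∈ T, Le K G e * t ∈ Submodule.span K T)
    (hg : ∀ e, ∀ t ∈ T, Lg K G e * t ∈ Submodule.span K T)
    (x : LPA K G) {m : LPA K G} (hm : m ∈ Submodule.span K T) :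
    x * m ∈ Submodule.span K T := by
  have span_mul {a : LPA K G} (ha : ∀ t ∈ T, a * t ∈ Submodule.span K T) :
      ∀ m ∈ Submodule.span K T, a * m ∈ Submodule.span K T := fun m hm =>
    Submodule.span_le (p := (Submodule.span K T).comap (LinearMap.mulLeft K a)) |>.2 ha hm
  obtain ⟨y, rfl⟩ := RingQuot.mkAlgHom_surjective K (LeavittRel K G) x
  induction y using FreeAlgebra.induction generalizing m with
  | grade0 r =>
    rw [AlgHom.commutes, Algebra.algebraMap_eq_smul_one, smul_one_mul]
    exact Submodule.smul_mem _ r hm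
  | grade1 a =>
    cases a with
    | vertex v => exact span_mul (hv v) m hm
    | edge e => exact span_mul (he e) m hm
    | ghost e => exact span_mul (hg e) m hm
  | mul a b iha ihb => rw [map_mul, mul_assoc]; exact iha (ihb hm)
  | add a b iha ihb => rw [map_add, add_mul]; exact add_mem (iha hm) (ihb hm)

structure LeavittFamily (G : DirGraph) (A : Type*) [Semiring A] where
  pv : G.V → A
  se : G.E → A
  sg : G.E → A
  pv_mul_self : ∀ v, pv v * pv v = pv v
  pv_mul_pv_of_ne : ∀ v w, v ≠ w → pv v * pv w = 0
  pv_src_mul_se : ∀ e, pv (G.src e) * se e = se e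
  se_mul_pv_rng : ∀ e, se e * pv (G.rng e) = se e
  pv_rng_mul_sg : ∀ e, pv (G.rng e) * sg e = sg e
  sg_mul_pv_src : ∀ e, sg e * pv (G.src e) = sg e
  sg_mul_se : ∀ e, sg e * se e = pv (G.rng e)
  sg_mul_se_of_ne : ∀ e f, e ≠ f → sg e * se f = 0
  ck : ∀ v (hfin : {e | G.src e = v}.Finite), {e | G.src e = v}.Nonempty →
    pv v = ∑ e ∈ hfin.toFinset, se e * sg e

namespace LeavittFamily

variable {G : DirGraph} {A : Type*} [Semiring A] [Algebra K A]

def gen (F : LeavittFamily G A) : LGen G → A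
  | .vertex v => F.pv v
  | .edge e => F.se e
  | .ghost e => F.sg e

variable (K) in
noncomputable def lift (F : LeavittFamily G A) : LPA K G →ₐ[K] A :=
  RingQuot.liftAlgHom K ⟨FreeAlgebra.lift K F.gen, fun x y h => by
    induction h with
    | vertex_same v => simpa [fv, gen] using F.pv_mul_self v
    | vertex_ne v w h => simpa [fv, gen] using F.pv_mul_pv_of_ne v w h
    | src_edge e => simpa [fv, fe, gen] using F.pv_src_mul_se e
    | edge_rng e => simpa [fv, fe, gen] using F.se_mul_pv_rng e
    | rng_ghost e => simpa [fv, fg, gen] using F.pv_rng_mul_sg e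
    | ghost_src e => simpa [fv, fg, gen] using F.sg_mul_pv_src e
    | ghost_edge_same e => simpa [fv, fe, fg, gen] using F.sg_mul_se e
    | ghost_edge_ne e f h => simpa [fe, fg, gen] using F.sg_mul_se_of_ne e f h
    | ck v hfin hne => simpa [fv, fe, fg, gen] using F.ck v hfin hne⟩

@[simp] theorem lift_Lv (F : LeavittFamily G A) (v : G.V) : F.lift K (Lv K G v) = F.pv v := by
  simp [lift, Lv, fv, gen]

@[simp] theorem lift_Le (F : LeavittFamily G A) (e : G.E) : F.lift K (Le K G e) = F.se e := by
  simp [lift, Le, fe, gen]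

@[simp] theorem lift_Lg (F : LeavittFamily G A) (e : G.E) : F.lift K (Lg K G e) = F.sg e := by
  simp [lift, Lg, fg, gen]

end LeavittFamily

end DirGraph

/- `Clock.V` and `Clock.E` are `Option ℕ` and `ℕ` only up to unfolding `Clock`, which `simp` and
`rw` do not do: hence the `ℕ`-annotated binders, and the rewriting with `▸` at `Lv K Clock none`. -/

namespace DirGraph.Clock

variable (K : Type) [Field K]

theorem not_regular (v : Clock.V) :
    ¬ ({e : Clock.E | Clock.src e = v}.Finite ∧ {e : Clock.E | Clock.src e = v}.Nonempty) := by
  rintro ⟨hfin, n, rfl⟩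
  exact Set.infinite_univ (α := ℕ) (by simpa [Clock] using hfin)

open Matrix in
noncomputable def matrixFamily : LeavittFamily Clock (Matrix (Fin 2) (Fin 2) (ℕ → K)) where
  pv
    | none => single 0 0 1
    | some m => single 1 1 (Pi.single m 1)
  se := fun m : ℕ => single 0 1 (Pi.single m 1)
  sg := fun m : ℕ => single 1 0 (Pi.single m 1)
  pv_mul_self := by
    rintro (_ | m) <;> simp [single_mul_single_same, Pi.single_one_mul_single_one]
  pv_mul_pv_of_ne := by
    rintro (_ | m) (_ | n) h
    · exact absurd rfl h
    · simp
    · simp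
    · have hmn : m ≠ n := fun hmn => h (congrArg some hmn)
      simp [single_mul_single_same, Pi.single_one_mul_single_one, hmn]
  pv_src_mul_se := fun m : ℕ => by simp [Clock, single_mul_single_same]
  se_mul_pv_rng := fun m : ℕ => by
    simp [Clock, single_mul_single_same, Pi.single_one_mul_single_one]
  pv_rng_mul_sg := fun m : ℕ => by
    simp [Clock, single_mul_single_same, Pi.single_one_mul_single_one]
  sg_mul_pv_src := fun m : ℕ => by simp [Clock, single_mul_single_same]
  sg_mul_se := fun m : ℕ => by simp [Clock, single_mul_single_same, Pi.single_one_mul_single_one]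
  sg_mul_se_of_ne := fun (m n : ℕ) (h : m ≠ n) => by
    simp [single_mul_single_same, Pi.single_one_mul_single_one, h]
  ck v hfin hne := absurd ⟨hfin, hne⟩ (not_regular v)

theorem matrixFamily_pv_none : (matrixFamily K).pv none = Matrix.single 0 0 1 := rfl

theorem matrixFamily_se (n : ℕ) : (matrixFamily K).se n = Matrix.single 0 1 (Pi.single n 1) := rfl

theorem matrixFamily_sg (n : ℕ) : (matrixFamily K).sg n = Matrix.single 1 0 (Pi.single n 1) := rfl

def leftIdealGens : Set (LPA K Clock) :=
  insert (Lv K Clock none)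
    (Set.range (fun n : ℕ => Le K Clock n * Lg K Clock n) ∪ Set.range (Lg K Clock))

section

open Submodule

variable {K}

theorem Lv_none_mem_span : Lv K Clock none ∈ span K (leftIdealGens K) :=
  subset_span (Set.mem_insert _ _)

theorem Le_mul_Lg_mem_span (n : ℕ) : Le K Clock n * Lg K Clock n ∈ span K (leftIdealGens K) :=
  subset_span (Set.mem_insert_of_mem _ (Or.inl ⟨n, rfl⟩))

theorem Lg_mem_span (n : ℕ) : Lg K Clock n ∈ span K (leftIdealGens K) :=
  subset_span (Set.mem_insert_of_mem _ (Or.inr ⟨n, rfl⟩))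

theorem Lv_mul_mem_span (v : Clock.V) :
    ∀ t ∈ leftIdealGens K, Lv K Clock v * t ∈ span K (leftIdealGens K) := by
  rintro _ (rfl | ⟨n, rfl⟩ | ⟨n, rfl⟩) <;> rcases v with _ | m
  · exact (Lv_mul_self K Clock none).symm ▸ Lv_none_mem_span
  · exact (Lv_mul_Lv_of_ne (K := K) (G := Clock) (Option.some_ne_none m)).symm ▸ zero_mem _
  · exact (Lv_src_mul_Le_mul_Lg (K := K) (G := Clock) n).symm ▸ Le_mul_Lg_mem_span n
  · exact (Lv_mul_Le_mul_Lg_of_ne (K := K) (G := Clock) (e := n) (Option.some_ne_none m)).symm ▸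
      zero_mem _
  · exact (Lv_mul_Lg_of_ne (K := K) (G := Clock) (Option.some_ne_none n).symm).symm ▸ zero_mem _
  · rcases eq_or_ne m n with rfl | h
    · exact (Lv_rng_mul_Lg (K := K) (G := Clock) m).symm ▸ Lg_mem_span m
    · exact (Lv_mul_Lg_of_ne (K := K) (G := Clock) (mt Option.some_inj.mp h)).symm ▸ zero_mem _

theorem Le_mul_mem_span (m : ℕ) :
    ∀ t ∈ leftIdealGens K, Le K Clock m * t ∈ span K (leftIdealGens K) := by
  rintro _ (rfl | ⟨n, rfl⟩ | ⟨n, rfl⟩)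
  · exact (Le_mul_Lv_of_ne (K := K) (G := Clock) (w := none) (Option.some_ne_none m)).symm ▸
      zero_mem _
  · exact (Le_mul_Le_mul_Lg_of_ne (K := K) (G := Clock) (e := m) (f := n)
      (Option.some_ne_none m)).symm ▸ zero_mem _
  · rcases eq_or_ne m n with rfl | h
    · exact Le_mul_Lg_mem_span m
    · exact (Le_mul_Lg_of_ne (K := K) (G := Clock) (mt Option.some_inj.mp h)).symm ▸ zero_mem _

theorem Lg_mul_mem_span (m : ℕ) :
    ∀ t ∈ leftIdealGens K, Lg K Clock m * t ∈ span K (leftIdealGens K) := by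
  rintro _ (rfl | ⟨n, rfl⟩ | ⟨n, rfl⟩)
  · exact (Lg_mul_Lv_src K Clock m).symm ▸ Lg_mem_span m
  · rcases eq_or_ne m n with rfl | h
    · exact (Lg_mul_Le_mul_Lg (K := K) (G := Clock) m).symm ▸ Lg_mem_span m
    · exact (Lg_mul_Le_mul_Lg_of_ne (K := K) (G := Clock) h).symm ▸ zero_mem _
  · exact (Lg_mul_Lg_of_ne (K := K) (G := Clock) (e := m) (Option.some_ne_none n).symm).symm ▸
      zero_mem _

theorem mul_Lv_none_mem_span (x : LPA K Clock) :
    x * Lv K Clock none ∈ span K (leftIdealGens K) :=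
  mul_mem_span_of_generators_mul_mem Lv_mul_mem_span Le_mul_mem_span Lg_mul_mem_span x
    Lv_none_mem_span

end

noncomputable def cornerHom : Unitization K (ℕ →₀ K) →ₙₐ[K] LPA K Clock :=
  Unitization.liftCorner (Lv K Clock none) (Lv_mul_self K Clock none)
    (orthogonalIdempotents_Le_mul_Lg (K := K) (G := Clock) :
      OrthogonalIdempotents fun n : ℕ => Le K Clock n * Lg K Clock n).linearCombinationHom
    (Finsupp.mul_linearCombination_of_mul_eq (Lv_src_mul_Le_mul_Lg (G := Clock)))
    (Finsupp.linearCombination_mul_of_mul_eq (Le_mul_Lg_mul_Lv_src (G := Clock)))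

theorem cornerHom_apply (x : Unitization K (ℕ →₀ K)) :
    cornerHom K x = x.fst • Lv K Clock none +
      Finsupp.linearCombination K (fun n : ℕ => Le K Clock n * Lg K Clock n) x.snd := rfl

theorem cornerHom_inl_one : cornerHom K (Unitization.inl 1) = Lv K Clock none := by
  simp [cornerHom_apply]

theorem cornerHom_inr_single (n : ℕ) :
    cornerHom K (Unitization.inr (Finsupp.single n 1)) = Le K Clock n * Lg K Clock n := by
  simp [cornerHom_apply]

theorem cornerHom_injective : Function.Injective (cornerHom K) := by
  let ev (m : ℕ) : LPA K Clock →ₗ[K] K := LinearMap.proj m ∘ₗ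
    Matrix.entryLinearMap K (ℕ → K) 0 0 ∘ₗ ((matrixFamily K).lift K).toLinearMap
  have ev_Lv (m : ℕ) : ev m (Lv K Clock none) = 1 := by
    simp [ev, (matrixFamily K).lift_Lv (K := K) none, matrixFamily_pv_none]
  have ev_comp (m : ℕ) : ev m ∘ (fun n : ℕ => Le K Clock n * Lg K Clock n) = Pi.single m 1 := by
    ext n
    simp [ev, (matrixFamily K).lift_Le (K := K) n, (matrixFamily K).lift_Lg (K := K) n,
      matrixFamily_se, matrixFamily_sg, Matrix.single_mul_single_same,
      Pi.single_one_mul_single_one, Pi.single_comm]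
  have ev_cornerHom (x : Unitization K (ℕ →₀ K)) (m : ℕ) :
      ev m (cornerHom K x) = x.fst + x.snd m := by
    rw [cornerHom_apply, map_add, map_smul, ev_Lv, Finsupp.apply_linearCombination, ev_comp,
      Finsupp.linearCombination_single_index, smul_eq_mul, smul_eq_mul, mul_one, mul_one]
  refine (injective_iff_map_eq_zero _).2 fun x hx => ?_
  exact Unitization.eq_zero_of_fst_add_apply_eq_zero fun m => by
    simpa [hx] using (ev_cornerHom x m).symm

theorem range_cornerHom : NonUnitalAlgHom.range (cornerHom K) = corner K Clock none := by
  apply le_antisymm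
  · rintro _ ⟨x, rfl⟩
    exact ⟨cornerHom K x, (Unitization.mul_liftCorner_mul x).symm⟩
  · rintro _ ⟨x, rfl⟩
    have span_le : Submodule.span K (leftIdealGens K) ≤
        (NonUnitalAlgHom.range (cornerHom K)).toSubmodule.comap
          (LinearMap.mulLeft K (Lv K Clock none)) := by
      refine Submodule.span_le.2 ?_
      rintro _ (rfl | ⟨n, rfl⟩ | ⟨n, rfl⟩)
      · exact ⟨1, (cornerHom_inl_one K).trans (Lv_mul_self K Clock none).symm⟩
      · exact ⟨_, (cornerHom_inr_single K n).trans
          (Lv_src_mul_Le_mul_Lg (K := K) (G := Clock) n).symm⟩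
      · exact ⟨0, (map_zero _).trans
          (Lv_mul_Lg_of_ne (G := Clock) (Option.some_ne_none n).symm).symm⟩
    rw [mul_assoc]
    exact span_le (mul_Lv_none_mem_span x)

end DirGraph.Clock

/-- For the infinite clock graph `C`, the assignment `v ↦ (1, 0)`,
`eₙeₙ* ↦ (0, εₙ)` extends to a `K`-algebra isomorphism from the corner `v L_K(C) v`
onto `A = K × (⊕_{n ∈ ℕ} K)`, the unitization of `⊕_{n ∈ ℕ} K`. -/
theorem clock_corner_iso_unitization (K : Type) [Field K] :
    ∃ φ : corner K Clock none →ₙₐ[K] Unitization K (ℕ →₀ K),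
      Function.Bijective φ ∧
      φ ⟨Lv K Clock none, Lv_mem_corner K Clock none⟩ = Unitization.inl (1 : K) ∧
      ∀ n : ℕ, φ ⟨Le K Clock n * Lg K Clock n, clock_ee_mem_corner K n⟩ =
        Unitization.inr (Finsupp.single n (1 : K)) := by
  let Ψ := NonUnitalAlgHom.codRestrict (Clock.cornerHom K) (corner K Clock none)
    fun x => Clock.range_cornerHom K ▸ NonUnitalAlgHom.mem_range_self _ x
  have hΨ : Function.Bijective Ψ := by
    refine ⟨(NonUnitalAlgHom.injective_codRestrict _ _ _).2 (Clock.cornerHom_injective K), ?_⟩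
    rintro ⟨y, hy⟩
    obtain ⟨x, rfl⟩ := (NonUnitalAlgHom.mem_range _).1 ((Clock.range_cornerHom K).symm ▸ hy)
    exact ⟨x, rfl⟩
  let e := Equiv.ofBijective Ψ hΨ
  refine ⟨Ψ.inverse e.symm e.left_inv e.right_inv, e.symm.bijective, ?_, fun n => ?_⟩
  · exact e.symm_apply_eq.2 (Subtype.ext (Clock.cornerHom_inl_one K).symm)
  · exact e.symm_apply_eq.2 (Subtype.ext (Clock.cornerHom_inr_single K n).symm)
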